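/- Let φ be a set of ground first-order clauses (over a signature without equality) such that within each clause all literals have the same ground term as their first argument. Then: (a) in any propositional resolution derivation from φ, every derived clause also has all its literals sharing one common first argument; and (b) in a resolution refutation of φ in which every clause is an ancestor of the empty clause, all clauses of the refutation have one and the same ground term as the first argument of all their literals. -/
import Mathlib


/-! Ground clauses over an abstract type `T` of ground terms and a type `P` of
predicate symbols (signature without equality), and propositional resolution. -/

variable {T P : Type}

/-- A ground atom: a predicate symbol applied to a list of ground terms. -/
abbrev GrAtom (T P : Type) := P × List T

/-- A ground literal: a ground atom or its negation. -/
abbrev GrLit (T P : Type) := Bool × GrAtom T P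

/-- A ground clause: a disjunction (set) of ground literals. -/
abbrev GrClause (T P : Type) := Set (GrLit T P)

/-- The first argument of a ground literal. -/
def GrLit.firstArg (l : GrLit T P) : Option T := l.2.2.head?

/-- Propositional resolution on ground clauses: from `C₁ ∨ A` and `C₂ ∨ ¬A`
derive `C₁ ∨ C₂`. -/
inductive GDerives (φ : Set (GrClause T P)) : GrClause T P → Prop
  | ax {C : GrClause T P} : C ∈ φ → GDerives φ C
  | res {A : GrAtom T P} {C₁ C₂ : GrClause T P} :
      GDerives φ (insert (true, A) C₁) → GDerives φ (insert (false, A) C₂) →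
      GDerives φ (C₁ ∪ C₂)

/-- A resolution derivation tree with conclusion `C` from the clause set `φ`;
by construction every clause occurring in the tree is an ancestor of the
conclusion. -/
inductive GProof (φ : Set (GrClause T P)) : GrClause T P → Type _
  | ax (C : GrClause T P) : C ∈ φ → GProof φ C
  | res (A : GrAtom T P) (C₁ C₂ : GrClause T P) :
      GProof φ (insert (true, A) C₁) → GProof φ (insert (false, A) C₂) →
      GProof φ (C₁ ∪ C₂)

/-- The set of clauses occurring in a derivation tree. -/
def GProof.clauses {φ : Set (GrClause T P)} :
    {C : GrClause T P} → GProof φ C → Set (GrClause T P)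
  | _, .ax C _ => {C}
  | _, .res _ C₁ C₂ π₁ π₂ => insert (C₁ ∪ C₂) (π₁.clauses ∪ π₂.clauses)

def GProof.toDerives {T P : Type} {φ : Set (GrClause T P)} :
    {C : GrClause T P} → GProof φ C → GDerives φ C
  | _, .ax _ h => .ax h
  | _, .res _ _ _ π₁ π₂ => .res π₁.toDerives π₂.toDerives

/-- Let `φ` be a set of ground clauses (predicates of arity at
least 1, no equality) such that within each clause all literals have the same
ground term as their first argument.  Then (a) every clause derived from `φ` by
propositional resolution also has all its literals sharing one common first
argument, and (b) in any resolution refutation of `φ` (a derivation tree of the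
empty clause, in which every clause is an ancestor of the empty clause), all
clauses of the refutation have one and the same ground term `t` as the first
argument of all their literals. -/
theorem statement_13 [Nonempty T] (φ : Set (GrClause T P))
    (harity : ∀ C ∈ φ, ∀ l ∈ C, (Prod.snd (Prod.snd (l : GrLit T P))) ≠ ([] : List T))
    (hsame : ∀ C ∈ φ, ∀ l₁ ∈ C, ∀ l₂ ∈ C, GrLit.firstArg l₁ = GrLit.firstArg l₂) :
    (∀ C : GrClause T P, GDerives φ C →
        ∀ l₁ ∈ C, ∀ l₂ ∈ C, GrLit.firstArg l₁ = GrLit.firstArg l₂) ∧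
    (∀ π : GProof φ (∅ : GrClause T P), ∃ t : T,
        ∀ D ∈ π.clauses, ∀ l ∈ D, GrLit.firstArg l = some t) := by
  -- Part (a)
  have hder : ∀ C : GrClause T P, GDerives φ C →
      ∀ l₁ ∈ C, ∀ l₂ ∈ C, GrLit.firstArg l₁ = GrLit.firstArg l₂ := by
    intro C h
    induction h with
    | ax hC => exact hsame _ hC
    | @res A C₁ C₂ h₁ h₂ ih₁ ih₂ =>
      have key : ∀ l ∈ C₁ ∪ C₂, GrLit.firstArg l = A.2.head? := by
        intro l hl
        rcases hl with hl | hl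
        · exact ih₁ l (Set.mem_insert_of_mem _ hl) (true, A) (Set.mem_insert _ _)
        · exact ih₂ l (Set.mem_insert_of_mem _ hl) (false, A) (Set.mem_insert _ _)
      intro l₁ hl₁ l₂ hl₂
      rw [key l₁ hl₁, key l₂ hl₂]
  -- derived clauses have literals with nonempty argument lists
  have hne : ∀ C : GrClause T P, GDerives φ C → ∀ l ∈ C, l.2.2 ≠ ([] : List T) := by
    intro C h
    induction h with
    | ax hC => exact harity _ hC
    | @res A C₁ C₂ h₁ h₂ ih₁ ih₂ =>
      intro l hl
      rcases hl with hl | hl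
      · exact ih₁ l (Set.mem_insert_of_mem _ hl)
      · exact ih₂ l (Set.mem_insert_of_mem _ hl)
  -- key lemma for part (b)
  have key : ∀ (C : GrClause T P) (π : GProof φ C) (t : T),
      (∃ l ∈ C, GrLit.firstArg l = some t) →
      ∀ D ∈ π.clauses, ∀ l ∈ D, GrLit.firstArg l = some t := by
    intro C π
    induction π with
    | ax C hC =>
      rintro t ⟨l₀, hl₀, hfa⟩ D hD l hl
      rw [Set.mem_singleton_iff.mp hD] at hl
      exact (hsame C hC l hl l₀ hl₀).trans hfa
    | res A C₁ C₂ π₁ π₂ ih₁ ih₂ =>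
      rintro t ⟨l₀, hl₀, hfa⟩
      have hAt : (A.2 : List T).head? = some t := by
        rcases hl₀ with hl₀ | hl₀
        · have := hder _ π₁.toDerives (true, A) (Set.mem_insert _ _)
            l₀ (Set.mem_insert_of_mem _ hl₀)
          exact this.trans hfa
        · have := hder _ π₂.toDerives (false, A) (Set.mem_insert _ _)
            l₀ (Set.mem_insert_of_mem _ hl₀)
          exact this.trans hfa
      have hcon : ∀ l ∈ C₁ ∪ C₂, GrLit.firstArg l = some t := by
        intro l hl
        rcases hl with hl | hl
        · exact (hder _ π₁.toDerives l (Set.mem_insert_of_mem _ hl)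
            (true, A) (Set.mem_insert _ _)).trans hAt
        · exact (hder _ π₂.toDerives l (Set.mem_insert_of_mem _ hl)
            (false, A) (Set.mem_insert _ _)).trans hAt
      intro D hD
      rcases hD with hD | hD | hD
      · subst hD; exact hcon
      · exact ih₁ t ⟨(true, A), Set.mem_insert _ _, hAt⟩ D hD
      · exact ih₂ t ⟨(false, A), Set.mem_insert _ _, hAt⟩ D hD
  refine ⟨hder, ?_⟩
  have main : ∀ (C : GrClause T P) (π : GProof φ C), C = (∅ : GrClause T P) →
      ∃ t : T, ∀ D ∈ π.clauses, ∀ l ∈ D, GrLit.firstArg l = some t := by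
    intro C π hC
    cases π with
    | ax C hCφ =>
      obtain ⟨t⟩ := ‹Nonempty T›
      refine ⟨t, ?_⟩
      intro D hD l hl
      rw [Set.mem_singleton_iff.mp hD, hC] at hl
      exact absurd hl (Set.notMem_empty l)
    | res A C₁ C₂ π₁ π₂ =>
      have hAne : (A.2 : List T) ≠ [] :=
        hne _ π₁.toDerives (true, A) (Set.mem_insert _ _)
      obtain ⟨t, ht⟩ : ∃ t, (A.2 : List T).head? = some t := by
        cases hA : (A.2 : List T) with
        | nil => exact absurd hA hAne
        | cons a as => exact ⟨a, rfl⟩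
      refine ⟨t, ?_⟩
      intro D hD
      rcases hD with hD | hD | hD
      · subst hD
        rw [hC]
        intro l hl
        exact absurd hl (Set.notMem_empty l)
      · exact key _ π₁ t ⟨(true, A), Set.mem_insert _ _, ht⟩ D hD
      · exact key _ π₂ t ⟨(false, A), Set.mem_insert _ _, ht⟩ D hD
  exact fun π => main _ π rfl
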